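/- Let g ≥ 1 be an integer, let Z be a symmetric g×g complex matrix whose imaginary part is positive definite, and let ω ∈ ℂ^g. Then the family (exp(π i nᵀ Z n + 2π i nᵀ ω))_{n ∈ ℤ^g}, indexed by integer vectors n of length g, is summable; in particular the Riemann theta series θ(ω, Z) = ∑_{n ∈ ℤ^g} exp(π i nᵀ Z n + 2π i nᵀ ω) converges absolutely. -/

import Mathlib

/-!
Write `Y = Im Z`. Since `Y` is positive definite, compactness of the unit sphere gives `c > 0`
with `nᵀ Y n ≥ c ∑ nᵢ²`, so the term of index `n` has modulus at most
`∏ᵢ exp (-π (c nᵢ² - 2 |Im ωᵢ| |nᵢ|))`. Each factor is the classical bound for the terms of the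
genus-one Jacobi theta series, summable over `ℤ`, and a product of nonnegative summable families
is summable over `ℤ^g`.
-/

open scoped BigOperators

/-- The Riemann theta series term for an integer vector `n`. -/
noncomputable def thetaTerm {g : ℕ} (ω : Fin g → ℂ) (Z : Matrix (Fin g) (Fin g) ℂ)
    (n : Fin g → ℤ) : ℂ :=
  Complex.exp (Real.pi * Complex.I *
      dotProduct (fun i => (n i : ℂ)) (Z.mulVec fun i => (n i : ℂ)) +
    2 * Real.pi * Complex.I * dotProduct (fun i => (n i : ℂ)) ω)

open Real Finset Metric Matrix

theorem summable_prod_pi_of_nonneg {g : ℕ} {α : Fin g → Type*} {f : ∀ i, α i → ℝ}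
    (hf : ∀ i, Summable (f i)) (hf₀ : ∀ i a, 0 ≤ f i a) :
    Summable fun x : (∀ i, α i) => ∏ i, f i (x i) := by
  induction g with
  | zero => exact Summable.of_finite
  | succ g ih =>
    rw [← (Fin.consEquiv α).summable_iff]
    have hprod := (hf 0).mul_of_nonneg (ih (fun i => hf i.succ) fun i => hf₀ i.succ)
      (hf₀ 0) fun x => prod_nonneg fun i _ => hf₀ i.succ (x i)
    simpa [Function.comp_def, Fin.consEquiv, Fin.prod_univ_succ] using hprod

theorem exists_pos_mul_norm_sq_le {E : Type*} [NormedAddCommGroup E] [NormedSpace ℝ E]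
    [FiniteDimensional ℝ E] {Q : E → ℝ} (hQ : Continuous Q)
    (hQ_smul : ∀ (t : ℝ) (x : E), Q (t • x) = t ^ 2 * Q x) (hQ_pos : ∀ x, x ≠ 0 → 0 < Q x) :
    ∃ c > 0, ∀ x, c * ‖x‖ ^ 2 ≤ Q x := by
  have hQ₀ : Q 0 = 0 := by simpa using hQ_smul 0 0
  rcases subsingleton_or_nontrivial E with hE | hE
  · exact ⟨1, one_pos, fun x => by simp [Subsingleton.elim x 0, hQ₀]⟩
  obtain ⟨x₀, hx₀, hmin⟩ := (isCompact_sphere (0 : E) 1).exists_isMinOn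
    (NormedSpace.sphere_nonempty.2 zero_le_one) hQ.continuousOn
  refine ⟨Q x₀, hQ_pos x₀ (ne_zero_of_mem_unit_sphere ⟨x₀, hx₀⟩), fun x => ?_⟩
  rcases eq_or_ne x 0 with rfl | hx
  · simp [hQ₀]
  have hx' : 0 < ‖x‖ := norm_pos_iff.2 hx
  have hunit : ‖x‖⁻¹ • x ∈ sphere (0 : E) 1 := by simp [norm_smul, hx'.ne']
  calc Q x₀ * ‖x‖ ^ 2 ≤ Q (‖x‖⁻¹ • x) * ‖x‖ ^ 2 := by gcongr; exact hmin hunit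
    _ = Q x := by rw [hQ_smul]; field_simp

theorem Matrix.PosDef.exists_pos_mul_sum_sq_le {n : Type*} [Fintype n] {Y : Matrix n n ℝ}
    (hY : Y.PosDef) : ∃ c > 0, ∀ x : n → ℝ, c * ∑ i, x i ^ 2 ≤ x ⬝ᵥ Y *ᵥ x := by
  obtain ⟨c, hc, hQ⟩ := exists_pos_mul_norm_sq_le (E := EuclideanSpace ℝ n)
    (Q := fun x => x.ofLp ⬝ᵥ Y *ᵥ x.ofLp) (by fun_prop)
    (fun t x => by
      simp only [WithLp.ofLp_smul, mulVec_smul, smul_dotProduct, dotProduct_smul, smul_eq_mul]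
      ring)
    (fun x hx => by simpa using hY.dotProduct_mulVec_pos (x := x.ofLp) (by simpa using hx))
  exact ⟨c, hc, fun x => by simpa [EuclideanSpace.real_norm_sq_eq] using hQ (WithLp.toLp 2 x)⟩

theorem norm_thetaTerm {g : ℕ} (ω : Fin g → ℂ) (Z : Matrix (Fin g) (Fin g) ℂ)
    (n : Fin g → ℤ) :
    ‖thetaTerm ω Z n‖ =
      rexp (-π * ((fun i => (n i : ℝ)) ⬝ᵥ Z.map Complex.im *ᵥ fun i => (n i : ℝ)) -
        2 * π * ((fun i => (n i : ℝ)) ⬝ᵥ fun i => (ω i).im)) := by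
  rw [thetaTerm, Complex.norm_exp]
  congr 1
  simp only [dotProduct, mulVec, mul_sum, Complex.add_re, Complex.re_sum, Complex.mul_re,
    Complex.ofReal_re, Complex.I_re, mul_zero, Complex.ofReal_im, Complex.I_im, mul_one, sub_self,
    Complex.intCast_re, Complex.intCast_im, sub_zero, Complex.mul_im, zero_add, zero_mul, add_zero,
    zero_sub, sum_neg_distrib, Complex.re_ofNat, Complex.im_ofNat, map_apply, neg_mul]
  ring

theorem norm_thetaTerm_le {g : ℕ} {ω : Fin g → ℂ} {Z : Matrix (Fin g) (Fin g) ℂ} {c : ℝ}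
    (hZ : ∀ x, c * ∑ i, x i ^ 2 ≤ x ⬝ᵥ Z.map Complex.im *ᵥ x) (n : Fin g → ℤ) :
    ‖thetaTerm ω Z n‖ ≤ ∏ i, rexp (-π * (c * (n i : ℝ) ^ 2 - 2 * |(ω i).im| * |(n i : ℝ)|)) := by
  rw [norm_thetaTerm, ← exp_sum, exp_le_exp]
  have hquad := hZ fun i => (n i : ℝ)
  have hlin :
      -((fun i => (n i : ℝ)) ⬝ᵥ fun i => (ω i).im) ≤ ∑ i, |(ω i).im| * |(n i : ℝ)| := by
    rw [dotProduct, ← sum_neg_distrib]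
    gcongr with i
    rw [mul_comm, ← abs_mul]
    exact neg_le_abs _
  have hrhs : ∑ i, -π * (c * (n i : ℝ) ^ 2 - 2 * |(ω i).im| * |(n i : ℝ)|)
      = -π * (c * ∑ i, (n i : ℝ) ^ 2) + 2 * π * ∑ i, |(ω i).im| * |(n i : ℝ)| := by
    simp only [mul_sum, ← sum_add_distrib]
    exact sum_congr rfl fun i _ => by ring
  rw [hrhs]
  linarith [mul_le_mul_of_nonneg_left hquad pi_pos.le,
    mul_le_mul_of_nonneg_left hlin two_pi_pos.le]

theorem riemann_theta_summable_general (g : ℕ)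
    (Z : Matrix (Fin g) (Fin g) ℂ)
    (hZpos : (Z.map Complex.im).PosDef)
    (ω : Fin g → ℂ) :
    Summable (fun n : Fin g → ℤ => thetaTerm ω Z n) := by
  obtain ⟨c, hc, hZ⟩ := hZpos.exists_pos_mul_sum_sq_le
  have hfactor (i : Fin g) :
      Summable fun m : ℤ => rexp (-π * (c * (m : ℝ) ^ 2 - 2 * |(ω i).im| * |(m : ℝ)|)) := by
    simpa using summable_pow_mul_jacobiTheta₂_term_bound |(ω i).im| hc 0
  exact .of_norm_bounded (summable_prod_pi_of_nonneg hfactor fun _ _ => (exp_pos _).le)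
    (norm_thetaTerm_le hZ)

/-- for `Z` in the Siegel upper half-space of genus `g ≥ 1` and any `ω ∈ ℂ^g`,
the family of terms of the Riemann theta series is summable, i.e. the theta series
converges absolutely. -/
theorem riemann_theta_summable (g : ℕ) (hg : 1 ≤ g)
    (Z : Matrix (Fin g) (Fin g) ℂ) (hZsym : Z.IsSymm)
    (hZpos : (Z.map Complex.im).PosDef)
    (ω : Fin g → ℂ) :
    Summable (fun n : Fin g → ℤ => thetaTerm ω Z n) :=
  riemann_theta_summable_general g Z hZpos ω
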